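/- Let c ∈ (1,2) and ε ∈ (0, min{1/4, 2−c}). There exists C > 0 such that for all real t ≥ 1 and all (ξ₁,ξ₂) ∈ ℝ² with |ξ₂| > t^{ε−c}, we have |(1/t)∫_0^t e^{-2πi(ξ₂s^c + ξ₁s)} ds| ≤ C·t^{-ε/4}. -/

import Mathlib

open MeasureTheory intervalIntegral

/-- `e x = e^{2πix}` -/
noncomputable def e (x : ℝ) : ℂ := Complex.exp (2 * Real.pi * Complex.I * x)

/-!
On `[0, 1]` the integrand has modulus one. On `[1, t]` the phase `φ s = -(ξ₂ s^c + ξ₁ s)` has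
`|φ''| = c (c - 1) |ξ₂| s^(c-2) ≥ c (c - 1) t^(ε-2)`, so van der Corput's second-derivative test
bounds that integral by `≪ t^(1 - ε/2)` in one go (no dyadic splitting is needed); dividing by `t`
gives `t^(-ε/2) ≤ t^(-ε/4)`.

For the second-derivative test with `φ'' ≥ λ`: `ψ = φ'` grows at rate at least `λ`, so `|ψ| ≥ √λ`
outside a window of length `2/√λ` around the point where `ψ` changes sign. The window contributes
at most its length, and each side at most `1/√λ` by the first-derivative test, which integrates by
parts against `1/(2πiψ)` and uses the monotonicity of `ψ` to telescope the error term.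
-/

open Real Set
open scoped ComplexConjugate

lemma norm_e (x : ℝ) : ‖e x‖ = 1 := by
  rw [e, show 2 * π * Complex.I * x = ((2 * π * x : ℝ) : ℂ) * Complex.I by push_cast; ring,
    Complex.norm_exp_ofReal_mul_I]

lemma e_neg (x : ℝ) : e (-x) = conj (e x) := by
  rw [e, e, ← Complex.exp_conj]
  congr 1
  simp [Complex.ext_iff]

lemma continuous_e : Continuous e := by
  unfold e; fun_prop

lemma HasDerivAt.e_comp {φ : ℝ → ℝ} {φ' s : ℝ} (h : HasDerivAt φ φ' s) :
    HasDerivAt (fun x => e (φ x)) (2 * π * Complex.I * φ' * e (φ s)) s :=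
  (h.ofReal_comp.const_mul (2 * π * Complex.I)).cexp.congr_deriv (mul_comm _ _)

lemma inv_sub_inv_le_inv_of_le_abs {x y m : ℝ} (hm : 0 < m) (hxy : x ≤ y) (hx : m ≤ |x|)
    (hy : m ≤ |y|) : x⁻¹ - y⁻¹ ≤ m⁻¹ := by
  rcases lt_or_ge x 0 with hx0 | hx0
  · rcases lt_or_ge y 0 with hy0 | hy0
    · rw [abs_of_neg hy0] at hy
      have := inv_anti₀ hm hy
      rw [inv_neg] at this
      linarith [inv_lt_zero.2 hx0]
    · linarith [inv_lt_zero.2 hx0, inv_nonneg.2 hy0, inv_pos.2 hm]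
  · rw [abs_of_nonneg hx0] at hx
    have hy0 : 0 < y := by linarith
    linarith [inv_anti₀ hm hx, inv_pos.2 hy0]

lemma monotoneOn_Icc_of_hasDerivAt_nonneg {f f' : ℝ → ℝ} {a b : ℝ}
    (hf : ∀ s ∈ Icc a b, HasDerivAt f (f' s) s) (hf' : ∀ s ∈ Icc a b, 0 ≤ f' s) :
    MonotoneOn f (Icc a b) :=
  monotoneOn_of_hasDerivWithinAt_nonneg (convex_Icc a b)
    (fun s hs => (hf s hs).continuousAt.continuousWithinAt)
    (fun s hs => (hf s (interior_subset hs)).hasDerivWithinAt)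
    (fun s hs => hf' s (interior_subset hs))

lemma integral_e_eq_by_parts {a b : ℝ} {φ ψ ρ : ℝ → ℝ} (hab : a ≤ b)
    (hφ : ∀ s ∈ Icc a b, HasDerivAt φ (ψ s) s) (hψ : ∀ s ∈ Icc a b, HasDerivAt ψ (ρ s) s)
    (hρc : ContinuousOn ρ (Icc a b)) (hψ0 : ∀ s ∈ Icc a b, ψ s ≠ 0) :
    ∫ s in a..b, e (φ s) =
      (2 * π * Complex.I)⁻¹ * ((ψ b)⁻¹ : ℝ) * e (φ b)
        - (2 * π * Complex.I)⁻¹ * ((ψ a)⁻¹ : ℝ) * e (φ a)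
        - ∫ s in a..b, (2 * π * Complex.I)⁻¹ * ((-ρ s / ψ s ^ 2 : ℝ) : ℂ) * e (φ s) := by
  have hψc : ContinuousOn ψ (Icc a b) := fun s hs => (hψ s hs).continuousAt.continuousWithinAt
  have hφc : ContinuousOn φ (Icc a b) := fun s hs => (hφ s hs).continuousAt.continuousWithinAt
  have hu : ∀ s ∈ uIcc a b, HasDerivAt (fun x => (2 * π * Complex.I)⁻¹ * ((ψ x)⁻¹ : ℝ))
      ((2 * π * Complex.I)⁻¹ * ((-ρ s / ψ s ^ 2 : ℝ) : ℂ)) s := fun s hs => by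
    rw [uIcc_of_le hab] at hs
    exact ((hψ s hs).inv (hψ0 s hs)).ofReal_comp.const_mul _
  have hv : ∀ s ∈ uIcc a b,
      HasDerivAt (fun x => e (φ x)) (2 * π * Complex.I * ψ s * e (φ s)) s := fun s hs => by
    rw [uIcc_of_le hab] at hs
    exact (hφ s hs).e_comp
  have hu'c : ContinuousOn (fun s => (2 * π * Complex.I)⁻¹ * ((-ρ s / ψ s ^ 2 : ℝ) : ℂ))
      (Icc a b) :=
    continuousOn_const.mul (Complex.continuous_ofReal.comp_continuousOn
      (hρc.neg.div (hψc.pow 2) fun s hs => pow_ne_zero 2 (hψ0 s hs)))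
  have hv'c : ContinuousOn (fun s => 2 * π * Complex.I * ψ s * e (φ s)) (Icc a b) :=
    (continuousOn_const.mul (Complex.continuous_ofReal.comp_continuousOn hψc)).mul
      (continuous_e.comp_continuousOn hφc)
  rw [← integral_mul_deriv_eq_deriv_mul hu hv
    (hu'c.intervalIntegrable_of_Icc hab) (hv'c.intervalIntegrable_of_Icc hab)]
  refine integral_congr fun s hs => ?_
  rw [uIcc_of_le hab] at hs
  have : (2 * π * Complex.I : ℂ) ≠ 0 := by simp [pi_ne_zero]
  have : (ψ s : ℂ) ≠ 0 := Complex.ofReal_ne_zero.2 (hψ0 s hs)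
  simp only [Complex.ofReal_inv]
  field_simp

theorem norm_integral_e_le_of_le_abs_deriv {a b m : ℝ} {φ ψ ρ : ℝ → ℝ} (hab : a ≤ b)
    (hm : 0 < m) (hφ : ∀ s ∈ Icc a b, HasDerivAt φ (ψ s) s)
    (hψ : ∀ s ∈ Icc a b, HasDerivAt ψ (ρ s) s) (hρc : ContinuousOn ρ (Icc a b))
    (hρ : ∀ s ∈ Icc a b, 0 ≤ ρ s) (hψm : ∀ s ∈ Icc a b, m ≤ |ψ s|) :
    ‖∫ s in a..b, e (φ s)‖ ≤ m⁻¹ := by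
  have hψ0 : ∀ s ∈ Icc a b, ψ s ≠ 0 := fun s hs h => by
    linarith [hψm s hs, h ▸ abs_zero (α := ℝ)]
  have hπ : 0 < 2 * π := by positivity
  have hk : ‖(2 * π * Complex.I)⁻¹‖ = (2 * π)⁻¹ := by simp [abs_of_pos pi_pos]
  have hbdry : ∀ s ∈ Icc a b,
      ‖(2 * π * Complex.I)⁻¹ * ((ψ s)⁻¹ : ℝ) * e (φ s)‖ ≤ (2 * π)⁻¹ * m⁻¹ := fun s hs => by
    simp only [norm_mul, norm_e, hk, Complex.norm_real, norm_inv, Real.norm_eq_abs, mul_one]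
    gcongr
    linarith [hψm s hs]
  -- `ρ ≥ 0`, so the norm of the integrand is `(2π)⁻¹ ρ / ψ²`, with primitive `-(2π)⁻¹ / ψ`
  have hvar : ‖∫ s in a..b, (2 * π * Complex.I)⁻¹ * ((-ρ s / ψ s ^ 2 : ℝ) : ℂ) * e (φ s)‖
      ≤ (2 * π)⁻¹ * ((ψ a)⁻¹ - (ψ b)⁻¹) := by
    have hprim : ∀ s ∈ uIcc a b, HasDerivAt (fun x => -((2 * π)⁻¹ * (ψ x)⁻¹))
        ((2 * π)⁻¹ * (ρ s / ψ s ^ 2)) s := fun s hs => by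
      rw [uIcc_of_le hab] at hs
      exact (((hψ s hs).inv (hψ0 s hs)).const_mul (2 * π)⁻¹).neg.congr_deriv (by ring)
    have hint : IntervalIntegrable (fun s => (2 * π)⁻¹ * (ρ s / ψ s ^ 2)) volume a b :=
      (continuousOn_const.mul (hρc.div (fun s hs => ((hψ s hs).continuousAt.pow 2
        ).continuousWithinAt) fun s hs => pow_ne_zero 2 (hψ0 s hs))).intervalIntegrable_of_Icc hab
    rw [show (2 * π)⁻¹ * ((ψ a)⁻¹ - (ψ b)⁻¹) = -((2 * π)⁻¹ * (ψ b)⁻¹) - -((2 * π)⁻¹ * (ψ a)⁻¹)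
      by ring, ← integral_eq_sub_of_hasDerivAt hprim hint]
    refine norm_integral_le_of_norm_le hab (Filter.Eventually.of_forall fun s hs => ?_) hint
    simp only [norm_mul, norm_e, hk, Complex.norm_real, Real.norm_eq_abs, mul_one, abs_div,
      abs_neg, abs_of_nonneg (hρ s (Ioc_subset_Icc_self hs)), abs_pow, sq_abs, le_refl]
  have ha : a ∈ Icc a b := left_mem_Icc.2 hab
  have hb : b ∈ Icc a b := right_mem_Icc.2 hab
  have hkey := inv_sub_inv_le_inv_of_le_abs hm
    (monotoneOn_Icc_of_hasDerivAt_nonneg hψ hρ ha hb hab) (hψm a ha) (hψm b hb)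
  calc ‖∫ s in a..b, e (φ s)‖
      ≤ 3 * ((2 * π)⁻¹ * m⁻¹) := by
        rw [integral_e_eq_by_parts hab hφ hψ hρc hψ0]
        refine (norm_sub_le _ _).trans ((add_le_add_left (norm_sub_le _ _) _).trans ?_)
        have := mul_le_mul_of_nonneg_left hkey (inv_nonneg.2 hπ.le)
        linarith [hbdry a ha, hbdry b hb]
    _ ≤ m⁻¹ := by
        rw [← mul_assoc]
        refine mul_le_of_le_one_left (inv_nonneg.2 hm.le) ?_
        rw [← div_eq_mul_inv, div_le_one hπ]
        linarith [pi_gt_three]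

lemma exists_mul_abs_sub_le_abs {a b l : ℝ} {ψ : ℝ → ℝ} (hab : a ≤ b)
    (hψc : ContinuousOn ψ (Icc a b)) (hψl : MonotoneOn (fun s => ψ s - l * s) (Icc a b)) :
    ∃ s₀ ∈ Icc a b, ∀ s ∈ Icc a b, l * |s - s₀| ≤ |ψ s| := by
  have hslope : ∀ x ∈ Icc a b, ∀ y ∈ Icc a b, x ≤ y → l * (y - x) ≤ ψ y - ψ x :=
    fun x hx y hy hxy => by linarith [hψl hx hy hxy]
  have ha : a ∈ Icc a b := left_mem_Icc.2 hab
  have hb : b ∈ Icc a b := right_mem_Icc.2 hab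
  by_cases hψa : 0 ≤ ψ a
  · refine ⟨a, ha, fun s hs => ?_⟩
    rw [abs_of_nonneg (sub_nonneg.2 hs.1)]
    linarith [hslope a ha s hs hs.1, le_abs_self (ψ s)]
  by_cases hψb : ψ b ≤ 0
  · refine ⟨b, hb, fun s hs => ?_⟩
    rw [abs_sub_comm, abs_of_nonneg (sub_nonneg.2 hs.2)]
    linarith [hslope s hs b hb hs.2, neg_le_abs (ψ s)]
  obtain ⟨s₀, hs₀, hψs₀⟩ := intermediate_value_Icc hab hψc
    (show (0 : ℝ) ∈ Icc (ψ a) (ψ b) from ⟨by linarith, by linarith⟩)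
  refine ⟨s₀, hs₀, fun s hs => ?_⟩
  rcases le_total s₀ s with h | h
  · rw [abs_of_nonneg (sub_nonneg.2 h)]
    linarith [hslope s₀ hs₀ s hs h, le_abs_self (ψ s)]
  · rw [abs_sub_comm, abs_of_nonneg (sub_nonneg.2 h)]
    linarith [hslope s hs s₀ hs₀ h, neg_le_abs (ψ s)]

lemma norm_integral_le_of_le_away_from {f : ℝ → ℂ} {a b s₀ δ B M : ℝ} (hs₀ : s₀ ∈ Icc a b)
    (hδ : 0 ≤ δ) (hB : 0 ≤ B) (hfc : ContinuousOn f (Icc a b)) (hM : ∀ s, ‖f s‖ ≤ M)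
    (hfar : ∀ x y, a ≤ x → x ≤ y → y ≤ b → (∀ s ∈ Icc x y, δ ≤ |s - s₀|) →
      ‖∫ s in x..y, f s‖ ≤ B) :
    ‖∫ s in a..b, f s‖ ≤ 2 * B + 2 * δ * M := by
  set u := max a (s₀ - δ)
  set v := min b (s₀ + δ)
  have hu₀ : s₀ - δ ≤ u := le_max_right _ _
  have hv₀ : v ≤ s₀ + δ := min_le_right _ _
  have hu : u ∈ Icc a b := ⟨le_max_left _ _, max_le (hs₀.1.trans hs₀.2) (by linarith [hs₀.2])⟩
  have hv : v ∈ Icc a b := ⟨le_min (hs₀.1.trans hs₀.2) (by linarith [hs₀.1]), min_le_left _ _⟩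
  have hus₀ : u ≤ s₀ := max_le hs₀.1 (by linarith)
  have hs₀v : s₀ ≤ v := le_min hs₀.2 (by linarith)
  have hleft : ‖∫ s in a..u, f s‖ ≤ B := by
    rcases le_or_gt (s₀ - δ) a with h | h
    · rwa [show u = a from max_eq_left h, integral_same, norm_zero]
    · have hu_eq : u = s₀ - δ := max_eq_right h.le
      refine hfar a u le_rfl hu.1 hu.2 fun s hs => ?_
      rw [abs_sub_comm, abs_of_nonneg (by linarith [hs.2])]
      linarith [hs.2]
  have hright : ‖∫ s in v..b, f s‖ ≤ B := by
    rcases le_or_gt b (s₀ + δ) with h | h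
    · rwa [show v = b from min_eq_left h, integral_same, norm_zero]
    · have hv_eq : v = s₀ + δ := min_eq_right h.le
      refine hfar v b hv.1 hv.2 le_rfl fun s hs => ?_
      rw [abs_of_nonneg (by linarith [hs.1])]
      linarith [hs.1]
  have hmid : ‖∫ s in u..v, f s‖ ≤ 2 * δ * M := by
    refine (norm_integral_le_of_norm_le_const fun s _ => hM s).trans ?_
    have hM0 : 0 ≤ M := (norm_nonneg _).trans (hM s₀)
    rw [abs_of_nonneg (by linarith), mul_comm]
    gcongr
    linarith
  have hint : ∀ x ∈ Icc a b, ∀ y ∈ Icc a b, IntervalIntegrable f volume x y :=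
    fun x hx y hy => (hfc.mono (uIcc_subset_Icc hx hy)).intervalIntegrable
  have ha : a ∈ Icc a b := ⟨le_rfl, hs₀.1.trans hs₀.2⟩
  have hb : b ∈ Icc a b := ⟨hs₀.1.trans hs₀.2, le_rfl⟩
  calc ‖∫ s in a..b, f s‖
      = ‖(∫ s in a..u, f s) + (∫ s in u..v, f s) + ∫ s in v..b, f s‖ := by
        rw [add_assoc, integral_add_adjacent_intervals (hint u hu v hv) (hint v hv b hb),
          integral_add_adjacent_intervals (hint a ha u hu) (hint u hu b hb)]
    _ ≤ B + 2 * δ * M + B := norm_add₃_le.trans (by gcongr)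
    _ = 2 * B + 2 * δ * M := by ring

theorem norm_integral_e_le_of_le_second_deriv {a b l : ℝ} {φ ψ ρ : ℝ → ℝ} (hab : a ≤ b)
    (hl : 0 < l) (hφ : ∀ s ∈ Icc a b, HasDerivAt φ (ψ s) s)
    (hψ : ∀ s ∈ Icc a b, HasDerivAt ψ (ρ s) s) (hρc : ContinuousOn ρ (Icc a b))
    (hρ : ∀ s ∈ Icc a b, l ≤ ρ s) :
    ‖∫ s in a..b, e (φ s)‖ ≤ 4 / √l := by
  set m := √l
  have hm : 0 < m := sqrt_pos.2 hl
  have hψl : MonotoneOn (fun s => ψ s - l * s) (Icc a b) :=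
    monotoneOn_Icc_of_hasDerivAt_nonneg
      (fun s hs => (hψ s hs).sub ((hasDerivAt_id s).const_mul l))
      (fun s hs => by simp only [mul_one, sub_nonneg]; exact hρ s hs)
  obtain ⟨s₀, hs₀, hψs₀⟩ := exists_mul_abs_sub_le_abs hab
    (fun s hs => (hψ s hs).continuousAt.continuousWithinAt) hψl
  have hfar : ∀ x y, a ≤ x → x ≤ y → y ≤ b → (∀ s ∈ Icc x y, m⁻¹ ≤ |s - s₀|) →
      ‖∫ s in x..y, e (φ s)‖ ≤ m⁻¹ := fun x y hax hxy hyb hs₀far => by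
    have hsub : Icc x y ⊆ Icc a b := Icc_subset_Icc hax hyb
    refine norm_integral_e_le_of_le_abs_deriv hxy hm (fun s hs => hφ s (hsub hs))
      (fun s hs => hψ s (hsub hs)) (hρc.mono hsub)
      (fun s hs => hl.le.trans (hρ s (hsub hs))) fun s hs => ?_
    calc m = l * m⁻¹ := by rw [← div_eq_mul_inv, div_sqrt]
      _ ≤ l * |s - s₀| := by gcongr; exact hs₀far s hs
      _ ≤ |ψ s| := hψs₀ s (hsub hs)
  calc ‖∫ s in a..b, e (φ s)‖
      ≤ 2 * m⁻¹ + 2 * m⁻¹ * 1 :=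
        norm_integral_le_of_le_away_from hs₀ (by positivity) (by positivity)
          (continuous_e.comp_continuousOn fun s hs => (hφ s hs).continuousAt.continuousWithinAt)
          (fun s => (norm_e _).le) hfar
    _ = 4 / m := by ring

theorem norm_integral_e_le_of_le_abs_second_deriv {a b l : ℝ} {φ ψ ρ : ℝ → ℝ} (hab : a ≤ b)
    (hl : 0 < l) (hφ : ∀ s ∈ Icc a b, HasDerivAt φ (ψ s) s)
    (hψ : ∀ s ∈ Icc a b, HasDerivAt ψ (ρ s) s) (hρc : ContinuousOn ρ (Icc a b))
    (hρ : (∀ s ∈ Icc a b, l ≤ ρ s) ∨ ∀ s ∈ Icc a b, ρ s ≤ -l) :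
    ‖∫ s in a..b, e (φ s)‖ ≤ 4 / √l := by
  rcases hρ with hρ | hρ
  · exact norm_integral_e_le_of_le_second_deriv hab hl hφ hψ hρc hρ
  · calc ‖∫ s in a..b, e (φ s)‖ = ‖conj (∫ s in a..b, e (-φ s))‖ := by
          simp only [← intervalIntegral_conj, ← e_neg, neg_neg]
      _ = ‖∫ s in a..b, e (-φ s)‖ := RCLike.norm_conj _
      _ ≤ 4 / √l := norm_integral_e_le_of_le_second_deriv hab hl (fun s hs => (hφ s hs).neg)
          (fun s hs => (hψ s hs).neg) hρc.neg fun s hs => le_neg.2 (hρ s hs)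

lemma norm_integral_e_rpow_phase_le {c ε t ξ₁ ξ₂ : ℝ} (hc1 : 1 < c) (hc2 : c ≤ 2) (ht : 1 ≤ t)
    (hξ : t ^ (ε - c) < |ξ₂|) :
    ‖∫ s in (1 : ℝ)..t, e (-(ξ₂ * s ^ c + ξ₁ * s))‖ ≤ 4 / √(c * (c - 1)) * t ^ (1 - ε / 2) := by
  have ht0 : 0 < t := one_pos.trans_le ht
  have hcc : 0 < c * (c - 1) := mul_pos (by linarith) (by linarith)
  have hφ : ∀ s ∈ Icc 1 t, HasDerivAt (fun s => -(ξ₂ * s ^ c + ξ₁ * s))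
      (-(ξ₂ * (c * s ^ (c - 1)) + ξ₁)) s := fun s hs =>
    (((hasDerivAt_rpow_const (Or.inl (one_pos.trans_le hs.1).ne')).const_mul ξ₂).add
      ((hasDerivAt_id s).const_mul ξ₁)).neg.congr_deriv (by simp)
  have hψ : ∀ s ∈ Icc 1 t, HasDerivAt (fun s => -(ξ₂ * (c * s ^ (c - 1)) + ξ₁))
      (-(ξ₂ * c * (c - 1)) * s ^ (c - 2)) s := fun s hs => by
    refine ((((hasDerivAt_rpow_const (p := c - 1) (Or.inl (one_pos.trans_le hs.1).ne')).const_mul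
      c).const_mul ξ₂).add_const ξ₁).neg.congr_deriv ?_
    rw [show c - 1 - 1 = c - 2 by ring]
    ring
  have hρc : ContinuousOn (fun s => -(ξ₂ * c * (c - 1)) * s ^ (c - 2)) (Icc 1 t) :=
    continuousOn_const.mul fun s hs =>
      (continuousAt_rpow_const s _ (Or.inl (one_pos.trans_le hs.1).ne')).continuousWithinAt
  have hlow : ∀ s ∈ Icc 1 t, c * (c - 1) * t ^ (ε - 2) ≤ c * (c - 1) * |ξ₂| * s ^ (c - 2) :=
    fun s hs => by
    have hs0 : 0 < s := one_pos.trans_le hs.1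
    calc c * (c - 1) * t ^ (ε - 2) = c * (c - 1) * (t ^ (ε - c) * t ^ (c - 2)) := by
          rw [← rpow_add ht0]; ring_nf
      _ ≤ c * (c - 1) * (|ξ₂| * s ^ (c - 2)) := by
          refine mul_le_mul_of_nonneg_left (mul_le_mul hξ.le ?_ (rpow_nonneg ht0.le _)
            (abs_nonneg _)) hcc.le
          exact Real.rpow_le_rpow_of_nonpos hs0 hs.2 (by linarith)
      _ = c * (c - 1) * |ξ₂| * s ^ (c - 2) := by ring
  have hsign : (∀ s ∈ Icc 1 t, c * (c - 1) * t ^ (ε - 2) ≤ -(ξ₂ * c * (c - 1)) * s ^ (c - 2)) ∨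
      ∀ s ∈ Icc 1 t, -(ξ₂ * c * (c - 1)) * s ^ (c - 2) ≤ -(c * (c - 1) * t ^ (ε - 2)) := by
    rcases le_or_gt ξ₂ 0 with h | h
    · left; intro s hs
      have := hlow s hs
      rw [abs_of_nonpos h] at this
      linarith
    · right; intro s hs
      have := hlow s hs
      rw [abs_of_pos h] at this
      linarith
  have hsqrt : √(c * (c - 1) * t ^ (ε - 2)) = √(c * (c - 1)) * (t ^ (1 - ε / 2))⁻¹ := by
    rw [sqrt_mul hcc.le, sqrt_eq_rpow, sqrt_eq_rpow, ← rpow_mul ht0.le, ← rpow_neg ht0.le]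
    ring_nf
  calc _ ≤ 4 / √(c * (c - 1) * t ^ (ε - 2)) :=
        norm_integral_e_le_of_le_abs_second_deriv ht (by positivity) hφ hψ hρc hsign
    _ = 4 / √(c * (c - 1)) * t ^ (1 - ε / 2) := by rw [hsqrt]; field_simp

theorem stmt9 (c ε : ℝ) (hc1 : 1 < c) (hc2 : c < 2)
    (hε1 : 0 < ε) (hε2 : ε < min (1/4) (2 - c)) :
    ∃ C > (0 : ℝ), ∀ (t : ℝ), 1 ≤ t → ∀ (ξ₁ ξ₂ : ℝ),
      t ^ (ε - c) < |ξ₂| →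
      ‖((t : ℂ))⁻¹ * ∫ s in (0 : ℝ)..t, e (-(ξ₂ * s ^ c + ξ₁ * s))‖ ≤
        C * t ^ (-(ε / 4)) := by
  set K := 4 / √(c * (c - 1))
  have hK : 0 < K := div_pos four_pos (sqrt_pos.2 (mul_pos (by linarith) (by linarith)))
  refine ⟨1 + K, by positivity, fun t ht ξ₁ ξ₂ hξ => ?_⟩
  have ht0 : 0 < t := one_pos.trans_le ht
  set f : ℝ → ℂ := fun s => e (-(ξ₂ * s ^ c + ξ₁ * s))
  have hf : Continuous f := continuous_e.comp (by fun_prop (disch := linarith))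
  have hnear : ‖∫ s in (0 : ℝ)..1, f s‖ ≤ 1 := by
    simpa using norm_integral_le_of_norm_le_const (a := 0) (b := 1) fun s _ => (norm_e _).le
  have hfar := norm_integral_e_rpow_phase_le (ξ₁ := ξ₁) hc1 hc2.le ht hξ
  have hε4 : ε ≤ 4 := by linarith [min_le_left (1 / 4 : ℝ) (2 - c)]
  calc ‖(t : ℂ)⁻¹ * ∫ s in (0 : ℝ)..t, f s‖
      = t⁻¹ * ‖(∫ s in (0 : ℝ)..1, f s) + ∫ s in (1 : ℝ)..t, f s‖ := by
        rw [integral_add_adjacent_intervals (hf.intervalIntegrable _ _)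
          (hf.intervalIntegrable _ _), norm_mul, norm_inv, Complex.norm_real,
          Real.norm_of_nonneg ht0.le]
    _ ≤ t⁻¹ * (1 + K * t ^ (1 - ε / 2)) := by gcongr; exact norm_add_le_of_le hnear hfar
    _ = t ^ (-1 : ℝ) + K * t ^ (-(ε / 2)) := by
        rw [rpow_neg_one, mul_add, mul_one, mul_left_comm, ← rpow_neg_one, ← rpow_add ht0]
        ring_nf
    _ ≤ t ^ (-(ε / 4)) + K * t ^ (-(ε / 4)) := by
        gcongr <;> linarith
    _ = (1 + K) * t ^ (-(ε / 4)) := by ring
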